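/- arXiv:2605.08857 — 2 statements merged into one kernel-verified Lean document; each statement's English description precedes it below -/
import Mathlib

section
/- Let (Ω, 𝔽, P) be a probability space, F : ℝ → ℝ, p ∈ (0,1), and ξ ∈ ℝ such that for every ε > 0, F(ξ − ε) < p < F(ξ + ε). For each n let F̂_n : Ω → (ℝ → ℝ) be such that F̂_n(ω) is nondecreasing for every ω, and let Δ_n : Ω → ℝ be random variables with sup_{ρ∈ℝ} |F̂_n(ω)(ρ) − F(ρ)| ≤ Δ_n(ω) for every ω, such that Δ_n → 0 in probability (i.e. for every δ > 0, P(Δ_n > δ) → 0). Define ξ̂_n(ω) = inf{ρ ∈ ℝ : F̂_n(ω)(ρ) ≥ p}. Then ξ̂_n → ξ in probability: for every ε > 0, P(|ξ̂_n − ξ| > ε) → 0 as n → ∞. -/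
open MeasureTheory Filter

/-! If `Ĝ` is uniformly within `d` of `F` and `d` is smaller than both gaps `p - F (ξ - ε)` and
`F (ξ + ε) - p`, then `Ĝ (ξ - ε) < p ≤ Ĝ (ξ + ε)`, so by monotonicity the generalized inverse
`inf {ρ | p ≤ Ĝ ρ}` lies in `[ξ - ε, ξ + ε]`. Hence the event `|ξ̂ₙ - ξ| > ε` is contained in the
event that `Δₙ` exceeds half the smaller gap, whose probability tends to zero. -/

lemma Monotone.csInf_superlevel_mem_Icc {G : ℝ → ℝ} (hG : Monotone G) {p a b : ℝ}
    (ha : G a < p) (hb : p ≤ G b) : sInf {ρ | p ≤ G ρ} ∈ Set.Icc a b := by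
  have hlower : a ∈ lowerBounds {ρ | p ≤ G ρ} := fun ρ hρ =>
    le_of_not_gt fun hρa => (hρ.trans (hG hρa.le)).not_gt ha
  exact ⟨le_csInf ⟨b, hb⟩ hlower, csInf_le ⟨a, hlower⟩ hb⟩

lemma abs_csInf_superlevel_sub_le {F G : ℝ → ℝ} (hG : Monotone G) {p ξ ε d : ℝ}
    (hclose : ∀ ρ, |G ρ - F ρ| ≤ d) (hlo : d < p - F (ξ - ε)) (hhi : d ≤ F (ξ + ε) - p) :
    |sInf {ρ | p ≤ G ρ} - ξ| ≤ ε := by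
  have hbelow : G (ξ - ε) < p := by linarith [(abs_le.mp (hclose (ξ - ε))).2]
  have habove : p ≤ G (ξ + ε) := by linarith [(abs_le.mp (hclose (ξ + ε))).1]
  obtain ⟨h₁, h₂⟩ := hG.csInf_superlevel_mem_Icc hbelow habove
  exact abs_sub_le_iff.mpr ⟨by linarith, by linarith⟩

theorem quantile_consistency_in_probability_general
    {Ω : Type*} [MeasurableSpace Ω] (μ : Measure Ω)
    (F : ℝ → ℝ) (p : ℝ) (ξ : ℝ)
    (hid : ∀ ε > (0 : ℝ), F (ξ - ε) < p ∧ p < F (ξ + ε))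
    (Fhat : ℕ → Ω → ℝ → ℝ) (hmono : ∀ n ω, Monotone (Fhat n ω))
    (Δ : ℕ → Ω → ℝ)
    (hbound : ∀ n ω, ∀ ρ : ℝ, |Fhat n ω ρ - F ρ| ≤ Δ n ω)
    (hΔ : ∀ δ > (0 : ℝ), Tendsto (fun n => μ {ω | δ < Δ n ω}) atTop (nhds 0)) :
    ∀ ε > (0 : ℝ),
      Tendsto (fun n => μ {ω | ε < |sInf {ρ : ℝ | p ≤ Fhat n ω ρ} - ξ|})
        atTop (nhds 0) := by
  intro ε hε
  obtain ⟨hlo, hhi⟩ := hid ε hε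
  set δ := min (p - F (ξ - ε)) (F (ξ + ε) - p)
  have hδ : 0 < δ := lt_min (by linarith) (by linarith)
  have hsubset : ∀ n, {ω | ε < |sInf {ρ : ℝ | p ≤ Fhat n ω ρ} - ξ|} ⊆ {ω | δ / 2 < Δ n ω} := by
    intro n ω (hω : ε < _)
    by_contra hlarge
    have hsmall : Δ n ω ≤ δ / 2 := not_lt.mp hlarge
    refine hω.not_ge (abs_csInf_superlevel_sub_le (hmono n ω) (hbound n ω) ?_ ?_)
    · linarith [min_le_left (p - F (ξ - ε)) (F (ξ + ε) - p)]
    · linarith [min_le_right (p - F (ξ - ε)) (F (ξ + ε) - p)]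
  exact tendsto_of_tendsto_of_tendsto_of_le_of_le tendsto_const_nhds (hΔ (δ / 2) (by linarith))
    (fun _ => zero_le) (fun n => measure_mono (hsubset n))

/-- Quantile consistency: uniform CDF consistency in probability, combined with the
quantile identification condition `F(ξ − ε) < p < F(ξ + ε)` for all `ε > 0`, yields
convergence in probability of the estimated weighted quantiles
`ξ̂_n = inf {ρ : F̂_n(ρ) ≥ p}` to the target quantile `ξ`. -/
theorem quantile_consistency_in_probability
    {Ω : Type*} [MeasurableSpace Ω] (μ : Measure Ω) [IsProbabilityMeasure μ]
    (F : ℝ → ℝ) (p : ℝ) (hp0 : 0 < p) (hp1 : p < 1) (ξ : ℝ)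
    (hid : ∀ ε > (0 : ℝ), F (ξ - ε) < p ∧ p < F (ξ + ε))
    (Fhat : ℕ → Ω → ℝ → ℝ) (hmono : ∀ n ω, Monotone (Fhat n ω))
    (Δ : ℕ → Ω → ℝ)
    (hbound : ∀ n ω, ∀ ρ : ℝ, |Fhat n ω ρ - F ρ| ≤ Δ n ω)
    (hΔ : ∀ δ > (0 : ℝ), Tendsto (fun n => μ {ω | δ < Δ n ω}) atTop (nhds 0)) :
    ∀ ε > (0 : ℝ),
      Tendsto (fun n => μ {ω | ε < |sInf {ρ : ℝ | p ≤ Fhat n ω ρ} - ξ|})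
        atTop (nhds 0) :=
  quantile_consistency_in_probability_general μ F p ξ hid Fhat hmono Δ hbound hΔ
end

section
/- Let (Ω, 𝔽, P) be a probability space, E a real-valued random variable with distribution function F(t) = P(E ≤ t), ξ ∈ ℝ, and p ∈ ℝ with F(ξ) = p and F continuous at ξ. Let Ξ_n : Ω → ℝ be random variables with Ξ_n → ξ in probability (for every ε > 0, P(|Ξ_n − ξ| > ε) → 0 as n → ∞). Then P(E ≤ Ξ_n) → p as n → ∞. -/
/-!
Off the event `|Ξ_n - ξ| > ε` one has `{E ≤ ξ - ε} ⊆ {E ≤ Ξ_n} ⊆ {E ≤ ξ + ε}`, so `P(E ≤ Ξ_n)`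
lies between `F(ξ - ε)` and `F(ξ + ε)` up to `P(|Ξ_n - ξ| > ε)`, which tends to `0`.
Continuity of `F` at `ξ` lets `ε → 0`.
-/

open MeasureTheory Filter Topology

section Sandwich

variable {ι : Type*} {l : Filter ι} {F : ℝ → ℝ} {ξ : ℝ} {a : ι → ℝ} {b : ℝ → ι → ℝ}

theorem tendsto_of_forall_pos_le_add_of_le_add (hcont : ContinuousAt F ξ)
    (hb : ∀ ε > 0, Tendsto (b ε) l (𝓝 0))
    (hle : ∀ ε > 0, ∀ i, a i ≤ F (ξ + ε) + b ε i)
    (hge : ∀ ε > 0, ∀ i, F (ξ - ε) ≤ a i + b ε i) :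
    Tendsto a l (𝓝 (F ξ)) := by
  refine Metric.tendsto_nhds.2 fun δ hδ => ?_
  obtain ⟨ε, hε, hFε⟩ := Metric.continuousAt_iff.1 hcont (δ / 2) (half_pos hδ)
  have hε2 : |ε / 2| < ε := by rw [abs_of_pos (half_pos hε)]; exact half_lt_self hε
  have hup : dist (F (ξ + ε / 2)) (F ξ) < δ / 2 :=
    hFε (by rwa [Real.dist_eq, add_sub_cancel_left])
  have hlow : dist (F (ξ - ε / 2)) (F ξ) < δ / 2 :=
    hFε (by rwa [Real.dist_eq, sub_sub_cancel_left, abs_neg])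
  filter_upwards [(hb (ε / 2) (half_pos hε)).eventually_lt_const (half_pos hδ)] with i hbi
  have hai_le := hle (ε / 2) (half_pos hε) i
  have hai_ge := hge (ε / 2) (half_pos hε) i
  rw [Real.dist_eq, abs_lt]
  rw [Real.dist_eq, abs_lt] at hup hlow
  constructor <;> linarith

end Sandwich

section Deviation

variable {Ω : Type*} (E X : Ω → ℝ) (ξ ε : ℝ)

theorem setOf_le_subset_setOf_le_add_union :
    {ω | E ω ≤ X ω} ⊆ {ω | E ω ≤ ξ + ε} ∪ {ω | ε < |X ω - ξ|} := by
  intro ω (hω : E ω ≤ X ω)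
  rcases le_or_gt (X ω) (ξ + ε) with hX | hX
  · exact Or.inl (hω.trans hX)
  · exact Or.inr (lt_abs.2 (Or.inl (by linarith : ε < X ω - ξ)))

theorem setOf_le_sub_subset_setOf_le_union :
    {ω | E ω ≤ ξ - ε} ⊆ {ω | E ω ≤ X ω} ∪ {ω | ε < |X ω - ξ|} := by
  intro ω (hω : E ω ≤ ξ - ε)
  by_cases hX : ε < |X ω - ξ|
  · exact Or.inr hX
  · exact Or.inl (show E ω ≤ X ω by linarith [neg_abs_le (X ω - ξ)])

variable [MeasurableSpace Ω] (μ : Measure Ω) [IsFiniteMeasure μ]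

theorem measureReal_setOf_le_le_add :
    μ.real {ω | E ω ≤ X ω} ≤ μ.real {ω | E ω ≤ ξ + ε} + μ.real {ω | ε < |X ω - ξ|} :=
  (measureReal_mono (setOf_le_subset_setOf_le_add_union E X ξ ε)).trans
    (measureReal_union_le _ _)

theorem measureReal_setOf_le_sub_le_add :
    μ.real {ω | E ω ≤ ξ - ε} ≤ μ.real {ω | E ω ≤ X ω} + μ.real {ω | ε < |X ω - ξ|} :=
  (measureReal_mono (setOf_le_sub_subset_setOf_le_union E X ξ ε)).trans
    (measureReal_union_le _ _)

end Deviation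

/-- Asymptotic coverage: if the estimated quantiles `Ξ_n` converge in probability to the
target quantile `ξ` of the residual distribution function `F(t) = P(E ≤ t)` and `F` is
continuous at `ξ` with `F(ξ) = p`, then `P(E ≤ Ξ_n) → p`. -/
theorem asymptotic_coverage
    {Ω : Type*} [MeasurableSpace Ω] (μ : Measure Ω) [IsProbabilityMeasure μ]
    (E : Ω → ℝ) (F : ℝ → ℝ)
    (hF : ∀ t : ℝ, F t = (μ {ω | E ω ≤ t}).toReal)
    (ξ p : ℝ) (hFξ : F ξ = p) (hcont : ContinuousAt F ξ)
    (Ξ : ℕ → Ω → ℝ)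
    (hΞ : ∀ ε > (0 : ℝ), Tendsto (fun n => μ {ω | ε < |Ξ n ω - ξ|}) atTop (nhds 0)) :
    Tendsto (fun n => (μ {ω | E ω ≤ Ξ n ω}).toReal) atTop (nhds p) := by
  have hdev : ∀ ε > (0 : ℝ), Tendsto (fun n => μ.real {ω | ε < |Ξ n ω - ξ|}) atTop (𝓝 0) :=
    fun ε hε => (ENNReal.tendsto_toReal ENNReal.zero_ne_top).comp (hΞ ε hε)
  rw [← hFξ]
  refine tendsto_of_forall_pos_le_add_of_le_add hcont hdev (fun ε _ n => ?_) (fun ε _ n => ?_)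
  · rw [hF]
    exact measureReal_setOf_le_le_add E (Ξ n) ξ ε μ
  · rw [hF]
    exact measureReal_setOf_le_sub_le_add E (Ξ n) ξ ε μ
end
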